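/- arXiv:1809.03933 — 3 statements merged into one kernel-verified Lean document; each statement's English description precedes it below -/
import Mathlib

section
/- Let f : ℕ → ℂ be such that ∑_{n≥0} |f_n| converges, and let z ∈ ℂ. Then ∑_{m≥0} f_m z^m / m! = (1/(2π)) ∫_{-π}^{π} F(e^{i x}) e^{z e^{-i x}} dx, where F(w) = ∑_{n≥0} f_n w^n. -/
open MeasureTheory intervalIntegral

/-!
Expanding `e^{z e^{-ix}} = ∑ₘ zᵐ e^{-imx} / m!` and integrating term by term, the orthogonality
`∫_{-π}^{π} e^{ikx} dx = 2π δ_{k,0}` leaves `∫_{-π}^{π} e^{inx} e^{z e^{-ix}} dx = 2π zⁿ / n!`.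
Integrating `F(e^{ix}) e^{z e^{-ix}} = ∑ₙ fₙ e^{inx} e^{z e^{-ix}}` term by term once more gives
the claim; both interchanges are justified by dominated convergence, since `|e^{ix}| = 1`.
-/

theorem hasSum_intervalIntegral_of_summable_bound {ι E : Type*} [Countable ι]
    [NormedAddCommGroup E] [NormedSpace ℝ E] {a b : ℝ} {F : ι → ℝ → E} {G : ℝ → E}
    {bound : ι → ℝ} (hF : ∀ i, Continuous (F i)) (h_bound : ∀ i x, ‖F i x‖ ≤ bound i)
    (h_summable : Summable bound) (h_lim : ∀ x, HasSum (fun i => F i x) (G x)) :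
    HasSum (fun i => ∫ x in a..b, F i x) (∫ x in a..b, G x) :=
  hasSum_integral_of_dominated_convergence (fun i _ => bound i)
    (fun i => (hF i).aestronglyMeasurable) (fun i => .of_forall fun x _ => h_bound i x)
    (.of_forall fun _ _ => h_summable) intervalIntegrable_const
    (.of_forall fun x _ => h_lim x)

section

open Complex
open scoped Nat Real

theorem integral_exp_int_mul_I_mul (k : ℤ) :
    ∫ x in (-π)..π, exp (k * (I * x)) = if k = 0 then ((2 * π : ℝ) : ℂ) else 0 := by
  split_ifs with hk
  · simp [hk]
    ring
  have hkI : (k : ℂ) * I ≠ 0 := mul_ne_zero (by exact_mod_cast hk) I_ne_zero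
  have h_periodic : exp (k * I * π) = exp (k * I * (-π : ℝ)) := by
    rw [← mul_one (exp (k * I * (-π : ℝ))), ← exp_int_mul_two_pi_mul_I k, ← exp_add]
    push_cast
    ring_nf
  simp_rw [← mul_assoc]
  rw [integral_exp_mul_complex hkI, h_periodic, sub_self, zero_div]

theorem hasSum_exp_I_mul_pow_mul_exp (z : ℂ) (n : ℕ) (x : ℝ) :
    HasSum (fun m : ℕ => z ^ m / m ! * exp (((n - m : ℤ) : ℂ) * (I * x)))
      (exp (I * x) ^ n * exp (z * exp (-(I * x)))) := by
  have h_exp := (NormedSpace.expSeries_div_hasSum_exp (z * exp (-(I * x)))).mul_left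
    (exp (I * x) ^ n)
  rw [← exp_eq_exp_ℂ] at h_exp
  refine h_exp.congr_fun fun m => ?_
  rw [mul_pow, ← exp_nat_mul, ← exp_nat_mul,
    show ((n - m : ℤ) : ℂ) * (I * x) = n * (I * x) + m * -(I * x) by push_cast; ring, exp_add]
  ring

theorem integral_exp_I_mul_pow_mul_exp (z : ℂ) (n : ℕ) :
    ∫ x in (-π)..π, exp (I * x) ^ n * exp (z * exp (-(I * x))) =
      ((2 * π : ℝ) : ℂ) * (z ^ n / n !) := by
  have h_terms := hasSum_intervalIntegral_of_summable_bound (a := -π) (b := π)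
    (fun m => by fun_prop) (fun m x => by simp [norm_exp]) (Real.summable_pow_div_factorial ‖z‖)
    (hasSum_exp_I_mul_pow_mul_exp z n)
  refine h_terms.unique ((hasSum_ite_eq n _).congr_fun fun m => ?_)
  rw [intervalIntegral.integral_const_mul, integral_exp_int_mul_I_mul]
  rcases eq_or_ne m n with rfl | h_ne
  · simp [mul_comm]
  · simp [sub_eq_zero, h_ne, h_ne.symm]

end

/-- If `∑ ‖f n‖` converges, then for every `z : ℂ`,
`∑_{m≥0} f_m z^m / m! = (1/(2π)) ∫_{-π}^{π} F(e^{ix}) e^{z e^{-ix}} dx`,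
where `F(w) = ∑_{n≥0} f_n w^n`. -/
theorem egf_from_fourier (f : ℕ → ℂ) (hsum : Summable (fun n : ℕ => ‖f n‖)) (z : ℂ) :
    ∑' m : ℕ, f m * z ^ m / m.factorial =
      ((2 * Real.pi : ℝ) : ℂ)⁻¹ *
        ∫ x in (-Real.pi)..Real.pi,
          (∑' n : ℕ, f n * Complex.exp (Complex.I * (x : ℂ)) ^ n) *
            Complex.exp (z * Complex.exp (-(Complex.I * (x : ℂ)))) := by
  have h_bound (n : ℕ) (x : ℝ) : ‖f n * (Complex.exp (Complex.I * x) ^ n *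
      Complex.exp (z * Complex.exp (-(Complex.I * x))))‖ ≤ ‖f n‖ * Real.exp ‖z‖ := by
    rw [norm_mul, norm_mul, norm_pow, Complex.norm_exp_I_mul_ofReal, one_pow, one_mul]
    gcongr
    exact (Complex.norm_exp_le_exp_norm _).trans_eq (by simp [Complex.norm_exp])
  have h_lim (x : ℝ) : HasSum
      (fun n => f n * (Complex.exp (Complex.I * x) ^ n *
        Complex.exp (z * Complex.exp (-(Complex.I * x)))))
      ((∑' n : ℕ, f n * Complex.exp (Complex.I * (x : ℂ)) ^ n) *
        Complex.exp (z * Complex.exp (-(Complex.I * (x : ℂ))))) := by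
    have h_power_series : Summable fun n => f n * Complex.exp (Complex.I * x) ^ n :=
      .of_norm (by simpa [Complex.norm_exp_I_mul_ofReal] using hsum)
    simpa only [mul_assoc] using h_power_series.hasSum.mul_right _
  have h_terms := hasSum_intervalIntegral_of_summable_bound (a := -Real.pi) (b := Real.pi)
    (fun n => by fun_prop) h_bound (hsum.mul_right _) h_lim
  simp_rw [intervalIntegral.integral_const_mul, integral_exp_I_mul_pow_mul_exp] at h_terms
  have h_two_pi : ((2 * Real.pi : ℝ) : ℂ) ≠ 0 := by exact_mod_cast Real.two_pi_pos.ne'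
  rw [eq_inv_mul_iff_mul_eq₀ h_two_pi, ← tsum_mul_left, ← h_terms.tsum_eq]
  congr 1 with n
  ring
end

section
/- Let f : ℕ → ℂ and let z ∈ ℂ be such that the series ∑_{n≥0} |f_n| |z|^n converges. Then ∑_{n≥0} f_n z^n / (3n)! = (1/(2π)) ∫_{-π}^{π} F(z e^{-i t}) · E(e^{i t}) dt, where F(w) = ∑_{n≥0} f_n w^n and E(w) = ∑_{m≥0} w^m / (3m)!. -/
open MeasureTheory intervalIntegral

/-! Multiplying out the two absolutely convergent series gives a double series in the
exponentials `e^{i(m-n)t}` with absolutely summable coefficients, so it may be integrated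
termwise over `[-π, π]`; there the exponentials are orthogonal, and only the diagonal `m = n`,
i.e. `∑ f_n z^n / (3n)!`, survives. -/

open Complex

theorem integral_exp_int_mul_I (k : ℤ) :
    ∫ t in (-Real.pi)..Real.pi, exp (k * I * t) =
      if k = 0 then ((2 * Real.pi : ℝ) : ℂ) else 0 := by
  split_ifs with hk
  · simp [hk, two_mul]
  · have hkI : (k : ℂ) * I ≠ 0 := by simp [hk]
    rw [integral_exp_mul_complex hkI, div_eq_zero_iff, sub_eq_zero]
    left
    calc exp (k * I * Real.pi)
        = exp (k * I * (-Real.pi : ℝ)) * exp (k * (2 * Real.pi * I)) := by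
          rw [← exp_add]; push_cast; ring_nf
      _ = exp (k * I * (-Real.pi : ℝ)) := by rw [exp_int_mul_two_pi_mul_I, mul_one]

theorem integral_exp_neg_I_mul_pow_mul_exp_I_mul_pow (n m : ℕ) :
    ∫ t in (-Real.pi)..Real.pi, exp (-(I * t)) ^ n * exp (I * t) ^ m =
      if n = m then ((2 * Real.pi : ℝ) : ℂ) else 0 := by
  have hexp (t : ℝ) : exp (-(I * t)) ^ n * exp (I * t) ^ m = exp (((m - n : ℤ) : ℂ) * I * t) := by
    rw [← exp_nat_mul, ← exp_nat_mul, ← exp_add]; push_cast; ring_nf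
  simp_rw [hexp, integral_exp_int_mul_I, sub_eq_zero, Nat.cast_inj, eq_comm]

theorem tsum_prod_eq_tsum_diag {α M : Type*} [AddCommMonoid M] [TopologicalSpace M]
    {F : α × α → M} (hF : ∀ p : α × α, p.1 ≠ p.2 → F p = 0) :
    ∑' p, F p = ∑' a, F (a, a) := by
  have hdiag : Function.Injective fun a : α => (a, a) := fun _ _ h => congrArg Prod.fst h
  refine (hdiag.tsum_eq fun p hp => ⟨p.1, ?_⟩).symm
  by_contra hne
  exact hp (hF p fun h => hne (Prod.ext rfl h))

theorem integral_tsum_mul_tsum_exp_I {a b : ℕ → ℂ} (ha : Summable (‖a ·‖))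
    (hb : Summable (‖b ·‖)) :
    ∫ t in (-Real.pi)..Real.pi,
        (∑' n, a n * exp (-(I * t)) ^ n) * ∑' m, b m * exp (I * t) ^ m =
      ((2 * Real.pi : ℝ) : ℂ) * ∑' n, a n * b n := by
  set F : ℕ × ℕ → ℝ → ℂ := fun p t =>
    a p.1 * b p.2 * (exp (-(I * t)) ^ p.1 * exp (I * t) ^ p.2)
  have hF_norm (p : ℕ × ℕ) (t : ℝ) : ‖F p t‖ = ‖a p.1 * b p.2‖ := by
    simp [F, norm_exp]
  have hab : Summable fun p : ℕ × ℕ => ‖a p.1 * b p.2‖ := ha.mul_norm hb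
  have hF_summable (t : ℝ) : Summable (F · t) := .of_norm (by simpa only [hF_norm] using hab)
  have hexpand (t : ℝ) :
      (∑' n, a n * exp (-(I * t)) ^ n) * ∑' m, b m * exp (I * t) ^ m = ∑' p, F p t := by
    rw [tsum_mul_tsum_of_summable_norm (by simpa [norm_exp] using ha)
      (by simpa [norm_exp] using hb)]
    exact tsum_congr fun p => by ring
  have hswap : HasSum (fun p => ∫ t in (-Real.pi)..Real.pi, F p t)
      (∫ t in (-Real.pi)..Real.pi, ∑' p, F p t) :=
    hasSum_integral_of_dominated_convergence (fun p _ => ‖a p.1 * b p.2‖)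
      (fun p => (by fun_prop : Continuous (F p)).aestronglyMeasurable)
      (fun p => ae_of_all _ fun t _ => (hF_norm p t).le) (ae_of_all _ fun _ _ => hab)
      intervalIntegrable_const (ae_of_all _ fun t _ => (hF_summable t).hasSum)
  have hF_integral (p : ℕ × ℕ) : ∫ t in (-Real.pi)..Real.pi, F p t =
      a p.1 * b p.2 * if p.1 = p.2 then ((2 * Real.pi : ℝ) : ℂ) else 0 := by
    rw [intervalIntegral.integral_const_mul, integral_exp_neg_I_mul_pow_mul_exp_I_mul_pow]
  calc _ = ∫ t in (-Real.pi)..Real.pi, ∑' p, F p t := integral_congr fun t _ => hexpand t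
    _ = ∑' p, ∫ t in (-Real.pi)..Real.pi, F p t := hswap.tsum_eq.symm
    _ = ∑' n, ∫ t in (-Real.pi)..Real.pi, F (n, n) t :=
      tsum_prod_eq_tsum_diag fun p hp => by rw [hF_integral, if_neg hp, mul_zero]
    _ = _ := by simp only [hF_integral, if_pos, tsum_mul_right, mul_comm]

theorem summable_inv_factorial_comp {g : ℕ → ℕ} (hg : ∀ m, m ≤ g m) :
    Summable fun m => ((g m).factorial : ℝ)⁻¹ := by
  refine .of_nonneg_of_le (fun m => by positivity) (fun m => ?_)
    ((Real.summable_pow_div_factorial 1).congr fun n => by rw [one_pow, one_div])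
  gcongr
  exact hg m

/-- If `∑ ‖f n‖ ‖z‖^n` converges, then
`∑_{n≥0} f_n z^n / (3n)! = (1/(2π)) ∫_{-π}^{π} F(z e^{-it}) E(e^{it}) dt`,
where `F(w) = ∑_{n≥0} f_n w^n` and `E(w) = ∑_{m≥0} w^m/(3m)!`. -/
theorem triple_factorial_integral_formula (f : ℕ → ℂ) (z : ℂ)
    (hsum : Summable (fun n : ℕ => ‖f n‖ * ‖z‖ ^ n)) :
    ∑' n : ℕ, f n * z ^ n / ((3 * n).factorial : ℂ) =
      ((2 * Real.pi : ℝ) : ℂ)⁻¹ *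
        ∫ t in (-Real.pi)..Real.pi,
          (∑' n : ℕ, f n * (z * Complex.exp (-(Complex.I * (t : ℂ)))) ^ n) *
            ∑' m : ℕ, Complex.exp (Complex.I * (t : ℂ)) ^ m / ((3 * m).factorial : ℂ) := by
  have hdiag := integral_tsum_mul_tsum_exp_I (a := fun n => f n * z ^ n)
    (b := fun m => ((3 * m).factorial : ℂ)⁻¹) (by simpa using hsum)
    (by simpa using summable_inv_factorial_comp fun m => by omega)
  simp only [mul_pow, ← mul_assoc, div_eq_inv_mul] at hdiag ⊢
  rw [hdiag, inv_mul_cancel_left₀ (ofReal_ne_zero.2 Real.two_pi_pos.ne')]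
  exact tsum_congr fun n => by ring
end

section
/- Let a ≥ 1 and b ≥ 0 be integers, let f : ℕ → ℂ, and let z ∈ ℂ be such that the series ∑_{n≥0} |f_n| |z|^n converges. Then ∑_{n≥0} f_n z^n / (a n + b)! = (1/(2π)) ∫_{-π}^{π} F(z e^{-i t}) · E_{a,b}(e^{i t}) dt, where F(w) = ∑_{n≥0} f_n w^n and E_{a,b}(w) = ∑_{m≥0} w^m / (a m + b)!. -/
/-! Expanding both series, the integrand is the absolutely convergent double series
`∑_{n,m} f_n z^n / (am+b)! · e^{i(m-n)t}`. Integrating term by term, orthogonality of the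
characters `e^{ikt}` on `[-π, π]` keeps exactly the diagonal `m = n`, each term contributing
`2π f_n z^n / (an+b)!`. -/

open MeasureTheory intervalIntegral

theorem intervalIntegral.hasSum_integral_of_norm_le {ι E : Type*} [Countable ι]
    [NormedAddCommGroup E] [NormedSpace ℝ E] [CompleteSpace E] {F : ι → ℝ → E} {a b : ℝ}
    {C : ι → ℝ}
    (hF : ∀ i, AEStronglyMeasurable (F i) (volume.restrict (Set.uIoc a b)))
    (hFC : ∀ i t, ‖F i t‖ ≤ C i) (hC : Summable C) :
    HasSum (fun i => ∫ t in a..b, F i t) (∫ t in a..b, ∑' i, F i t) :=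
  hasSum_integral_of_dominated_convergence (fun i _ => C i) hF
    (fun i => .of_forall fun t _ => hFC i t) (.of_forall fun _ _ => hC)
    intervalIntegrable_const
    (.of_forall fun t _ => (hC.of_norm_bounded (hFC · t)).hasSum)

theorem summable_inv_factorial_comp_injective {k : ℕ → ℕ} (hk : Function.Injective k) :
    Summable fun m => ((k m).factorial : ℝ)⁻¹ := by
  have h := Real.summable_pow_div_factorial 1
  simp only [one_pow, one_div] at h
  exact h.comp_injective hk

open Complex in
open scoped Real in
theorem integral_exp_neg_pow_mul_exp_pow (n m : ℕ) :
    ∫ t in -π..π, exp (-(I * t)) ^ n * exp (I * t) ^ m =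
      if n = m then ((2 * π : ℝ) : ℂ) else 0 := by
  have hexp : ∀ t : ℝ, exp (-(I * t)) ^ n * exp (I * t) ^ m = exp (((m - n : ℤ) * I) * t) := by
    intro t
    rw [← exp_nat_mul, ← exp_nat_mul, ← exp_add]
    push_cast
    ring_nf
  simp_rw [hexp]
  split_ifs with h
  · subst h
    simp [two_mul]
  · have hk : ((m - n : ℤ) : ℂ) * I ≠ 0 :=
      mul_ne_zero (Int.cast_ne_zero.mpr (by omega)) I_ne_zero
    rw [integral_exp_mul_complex hk, div_eq_zero_iff, sub_eq_zero]
    left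
    -- `exp (k I π) = exp (-k I π)` because `exp (2 k π I) = 1`
    rw [← mul_right_inj' (exp_ne_zero (((m - n : ℤ) : ℂ) * I * π)), ← exp_add, ← exp_add]
    have := exp_int_mul_two_pi_mul_I (m - n)
    push_cast at this ⊢
    rw [mul_neg, add_neg_cancel, exp_zero, ← this]
    ring_nf

open Complex in
open scoped Real in
theorem integral_tsum_mul_exp_neg_pow_mul_tsum_mul_exp_pow {u v : ℕ → ℂ}
    (hu : Summable (‖u ·‖)) (hv : Summable (‖v ·‖)) :
    ∫ t in -π..π, (∑' n, u n * exp (-(I * t)) ^ n) * ∑' m, v m * exp (I * t) ^ m =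
      ((2 * π : ℝ) : ℂ) * ∑' n, u n * v n := by
  have hunit : ∀ (t : ℝ) (k : ℕ), ‖exp (-(I * t)) ^ k‖ = 1 ∧ ‖exp (I * t) ^ k‖ = 1 := by
    intro t k
    simp [norm_exp]
  set term : ℕ × ℕ → ℝ → ℂ := fun p t =>
    u p.1 * v p.2 * (exp (-(I * t)) ^ p.1 * exp (I * t) ^ p.2)
  have hprod : ∀ t : ℝ, (∑' n, u n * exp (-(I * t)) ^ n) * (∑' m, v m * exp (I * t) ^ m) =
      ∑' p, term p t := by
    intro t
    rw [tsum_mul_tsum_of_summable_norm (by simpa [(hunit t _).1] using hu)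
      (by simpa [(hunit t _).2] using hv)]
    exact tsum_congr fun p => by ring
  have hterm : HasSum (fun p => ∫ t in -π..π, term p t) (∫ t in -π..π, ∑' p, term p t) :=
    hasSum_integral_of_norm_le (C := fun p => ‖u p.1 * v p.2‖)
      (fun p => by fun_prop) (fun p t => by simp [term, hunit]) (hu.mul_norm hv)
  have hint : ∀ p : ℕ × ℕ, ∫ t in -π..π, term p t =
      u p.1 * v p.2 * if p.1 = p.2 then ((2 * π : ℝ) : ℂ) else 0 := fun p => by
    simp only [term, intervalIntegral.integral_const_mul, integral_exp_neg_pow_mul_exp_pow]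
  have hdiag : Function.support (fun p : ℕ × ℕ => u p.1 * v p.2 *
      if p.1 = p.2 then ((2 * π : ℝ) : ℂ) else 0) ⊆ Set.range fun n => (n, n) := by
    rintro ⟨n, m⟩ hnm
    obtain rfl : n = m := by by_contra h; simp [h] at hnm
    exact ⟨n, rfl⟩
  rw [integral_congr fun t _ => hprod t, ← hterm.tsum_eq, tsum_congr hint,
    ← (Function.LeftInverse.injective (g := Prod.fst) fun _ => rfl).tsum_eq hdiag]
  simp only [if_true, tsum_mul_right]
  ring

/-- For integers `a ≥ 1`, `b ≥ 0`: if `∑ ‖f n‖ ‖z‖^n` converges, then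
`∑_{n≥0} f_n z^n / (an+b)! = (1/(2π)) ∫_{-π}^{π} F(z e^{-it}) E_{a,b}(e^{it}) dt`,
where `F(w) = ∑_{n≥0} f_n w^n` and `E_{a,b}(w) = ∑_{m≥0} w^m/(am+b)!`. -/
theorem multifactorial_integral_formula (a b : ℕ) (ha : 1 ≤ a) (f : ℕ → ℂ) (z : ℂ)
    (hsum : Summable (fun n : ℕ => ‖f n‖ * ‖z‖ ^ n)) :
    ∑' n : ℕ, f n * z ^ n / ((a * n + b).factorial : ℂ) =
      ((2 * Real.pi : ℝ) : ℂ)⁻¹ *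
        ∫ t in (-Real.pi)..Real.pi,
          (∑' n : ℕ, f n * (z * Complex.exp (-(Complex.I * (t : ℂ)))) ^ n) *
            ∑' m : ℕ, Complex.exp (Complex.I * (t : ℂ)) ^ m / ((a * m + b).factorial : ℂ) := by
  have hf : Summable fun n => ‖f n * z ^ n‖ := by simpa only [norm_mul, norm_pow] using hsum
  have hE : Summable fun m => ‖((a * m + b).factorial : ℂ)⁻¹‖ := by
    simpa only [norm_inv, Complex.norm_natCast] using
      summable_inv_factorial_comp_injective (k := fun m => a * m + b) fun m n h =>
        Nat.eq_of_mul_eq_mul_left ha (Nat.add_right_cancel h)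
  simp only [mul_pow, ← mul_assoc, div_eq_inv_mul _ ((_ : ℕ) : ℂ)]
  rw [integral_tsum_mul_exp_neg_pow_mul_tsum_mul_exp_pow hf hE, ← mul_assoc,
    inv_mul_cancel₀ (by exact_mod_cast Real.two_pi_pos.ne'), one_mul]
  exact tsum_congr fun n => by ring
end
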